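/- Let n ≥ 2, let σ : ℤ → ℤ be an n-periodic bijection, and let s_i be an affine simple transposition. Then |ℓ(σ∘s_i) − ℓ(σ)| = 1, where ℓ(σ) = Σ_{1≤a<b≤n} |⌊(σ(b)−σ(a))/n⌋|. -/

import Mathlib

/-- The affine simple transposition s_i. -/
def affineSimple (n i : ℤ) : ℤ → ℤ := fun j =>
  if j % n = i % n then j + 1 else if j % n = (i + 1) % n then j - 1 else j

/-- Shi length statistic. -/
noncomputable def affineLength (n : ℤ) (σ : ℤ → ℤ) : ℤ :=
  ∑ a ∈ Finset.Icc (1 : ℤ) n, ∑ b ∈ Finset.Icc (1 : ℤ) n,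
    if a < b then |Int.fdiv (σ b - σ a) n| else 0

/-!
The Shi length can be read off any window `k+1, …, k+n` of `n` consecutive integers: sliding the
window by one trades the pairs `(k+1, b)` for the pairs `(b, k+n+1)`, and since
`σ (k+n+1) = σ (k+1) + n` and `σ b ≢ σ (k+1) mod n`, the identity `⌊-x⌋ = -⌊x⌋ - 1` for
non-integral `x` shows that the two pairs contribute equally. On the window starting at `i`,
`s_i` is the transposition of `i` and `i+1`, which reverses the relative order of that pair
only. Its contribution changes from `|q|` to `|-q-1|`, where `q = ⌊(σ(i+1) - σ i)/n⌋`, and these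
differ by exactly one.
-/

open Finset Function

namespace Int

lemma abs_fdiv_neg_add_self {n d : ℤ} (hn : n ≠ 0) (h : ¬ n ∣ d) :
    |fdiv (-d + n) n| = |fdiv d n| := by
  rw [add_fdiv_of_dvd_right dvd_rfl, Int.fdiv_self hn, neg_fdiv, if_neg (not_or.mpr ⟨hn, h⟩),
    sub_add_cancel, abs_neg]

lemma abs_sub_abs_fdiv_neg {n d : ℤ} (hn : n ≠ 0) (h : ¬ n ∣ d) :
    |(|fdiv (-d) n| - |fdiv d n|)| = 1 := by
  rw [neg_fdiv, if_neg (not_or.mpr ⟨hn, h⟩)]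
  rcases le_or_gt 0 (fdiv d n) with hq | hq
  · rw [abs_of_nonneg hq, abs_of_neg (by omega : -fdiv d n - 1 < 0),
      show -(-fdiv d n - 1) - fdiv d n = 1 by ring, abs_one]
  · rw [abs_of_neg hq, abs_of_nonneg (by omega : 0 ≤ -fdiv d n - 1),
      show -fdiv d n - 1 - -fdiv d n = -1 by ring, abs_neg, abs_one]

lemma emod_eq_emod_iff_of_abs_sub_lt {n a b : ℤ} (h : |a - b| < n) :
    a % n = b % n ↔ a = b := by
  refine ⟨fun hab => ?_, fun hab => hab ▸ rfl⟩
  have := eq_zero_of_abs_lt_dvd (ModEq.dvd hab.symm) h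
  omega

end Int

lemma dvd_sub_of_dvd_apply_sub {n : ℤ} {σ : ℤ → ℤ} (hinj : Injective σ)
    (hper : ∀ j, σ (j + n) = σ j + n) {a b : ℤ} (h : n ∣ σ b - σ a) : n ∣ b - a := by
  obtain ⟨k, hk⟩ := h
  have hb : σ b = σ (a + k • n) := by
    have := AddConstMapClass.map_add_zsmul (⟨σ, hper⟩ : AddConstMap ℤ ℤ n n) a k
    simp only [AddConstMap.coe_mk, smul_eq_mul] at this ⊢
    linarith
  exact ⟨k, by rw [hinj hb, smul_eq_mul]; ring⟩

section PairSum

variable {α M : Type*} [LinearOrder α] [AddCommGroup M]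

def pairSum (s : Finset α) (f : α → α → M) : M :=
  ∑ a ∈ s, ∑ b ∈ s, if a < b then f a b else 0

lemma pairSum_congr {s : Finset α} {f g : α → α → M} (h : ∀ a ∈ s, ∀ b ∈ s, f a b = g a b) :
    pairSum s f = pairSum s g :=
  sum_congr rfl fun a ha => sum_congr rfl fun b hb => by rw [h a ha b hb]

lemma pairSum_insert_of_lt {s : Finset α} {m : α} (hm : ∀ b ∈ s, m < b) (f : α → α → M) :
    pairSum (insert m s) f = pairSum s f + ∑ b ∈ s, f m b := by
  have hms : m ∉ s := fun h => lt_irrefl m (hm m h)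
  simp only [pairSum, sum_insert hms, lt_irrefl, if_false, zero_add, sum_add_distrib,
    sum_ite_of_true hm, sum_ite_of_false fun a ha => (hm a ha).not_gt, sum_const_zero]
  abel

lemma pairSum_insert_of_gt {s : Finset α} {m : α} (hm : ∀ a ∈ s, a < m) (f : α → α → M) :
    pairSum (insert m s) f = pairSum s f + ∑ a ∈ s, f a m := by
  have hms : m ∉ s := fun h => lt_irrefl m (hm m h)
  simp only [pairSum, sum_insert hms, lt_irrefl, if_false, zero_add, sum_add_distrib,
    sum_ite_of_true hm, sum_ite_of_false fun a ha => (hm a ha).not_gt, sum_const_zero]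
  abel

end PairSum

lemma pairSum_comp_swap {M : Type*} [AddCommGroup M] {s : Finset ℤ} {p : ℤ} (hp : p ∈ s)
    (hp' : p + 1 ∈ s) (f : ℤ → ℤ → M) :
    pairSum s (fun a b => f (Equiv.swap p (p + 1) a) (Equiv.swap p (p + 1) b)) =
      pairSum s f - f p (p + 1) + f (p + 1) p := by
  set e := Equiv.swap p (p + 1)
  have he : {a | e a ≠ a} ⊆ s := fun a ha => by
    rcases Equiv.swap_apply_ne_self_iff.mp ha with ⟨-, rfl | rfl⟩ <;> assumption
  have hreindex : pairSum s (fun a b => f (e a) (e b)) =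
      ∑ a ∈ s, ∑ b ∈ s, if e a < e b then f a b else 0 := by
    rw [pairSum, ← e.sum_comp s _ he]
    refine sum_congr rfl fun a _ => ?_
    rw [← e.sum_comp s _ he]
    simp only [e, Equiv.swap_apply_self]
  -- `p` and `p + 1` are adjacent, so no other pair changes its relative order under `e`.
  have hpoint : ∀ a b, (if e a < e b then f a b else 0) = (if a < b then f a b else 0)
      - (if b = p + 1 then if a = p then f a b else 0 else 0)
      + (if b = p then if a = p + 1 then f a b else 0 else 0) := by
    intro a b
    simp only [e, Equiv.swap_apply_def]
    split_ifs <;> first | omega | (subst_vars; simp_all)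
  simp only [hreindex, hpoint, sum_add_distrib, sum_sub_distrib, sum_ite_eq', hp, hp', if_true]
  rfl

section AffineSimple

variable {n : ℤ}

lemma affineSimple_add_self (i j : ℤ) : affineSimple n i (j + n) = affineSimple n i j + n := by
  simp only [affineSimple, Int.add_emod_right]
  split_ifs <;> ring

lemma affineSimple_involutive (hn : 2 ≤ n) (i : ℤ) : Involutive (affineSimple n i) := by
  have hne : ¬ i + 1 ≡ i [ZMOD n] := fun h =>
    absurd ((Int.emod_eq_emod_iff_of_abs_sub_lt (by simp; omega)).mp h) (by omega)
  intro j
  by_cases hi : j ≡ i [ZMOD n]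
  · have h1 : j + 1 ≡ i + 1 [ZMOD n] := hi.add_right 1
    have h2 : ¬ j + 1 ≡ i [ZMOD n] := fun h => hne (h1.symm.trans h)
    have e1 : affineSimple n i j = j + 1 := if_pos hi
    have e2 : affineSimple n i (j + 1) = j :=
      (if_neg h2).trans ((if_pos h1).trans (add_sub_cancel_right j 1))
    rw [e1, e2]
  · by_cases hi' : j ≡ i + 1 [ZMOD n]
    · have h1 : j - 1 ≡ i [ZMOD n] := by simpa using hi'.sub_right 1
      have e1 : affineSimple n i j = j - 1 := (if_neg hi).trans (if_pos hi')
      have e2 : affineSimple n i (j - 1) = j := (if_pos h1).trans (sub_add_cancel j 1)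
      rw [e1, e2]
    · have e : affineSimple n i j = j := (if_neg hi).trans (if_neg hi')
      rw [e, e]

lemma affineSimple_eq_swap (hn : 2 ≤ n) {i a : ℤ} (ha : i ≤ a) (ha' : a < i + n) :
    affineSimple n i a = Equiv.swap i (i + 1) a := by
  have hi : a % n = i % n ↔ a = i :=
    Int.emod_eq_emod_iff_of_abs_sub_lt (abs_sub_lt_iff.mpr ⟨by omega, by omega⟩)
  have hi' : a % n = (i + 1) % n ↔ a = i + 1 :=
    Int.emod_eq_emod_iff_of_abs_sub_lt (abs_sub_lt_iff.mpr ⟨by omega, by omega⟩)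
  simp only [affineSimple, hi, hi', Equiv.swap_apply_def]
  split_ifs <;> omega

end AffineSimple

section Window

variable {n : ℤ} {σ : ℤ → ℤ}

noncomputable def windowLength (n : ℤ) (σ : ℤ → ℤ) (k : ℤ) : ℤ :=
  pairSum (Icc (k + 1) (k + n)) fun a b => |Int.fdiv (σ b - σ a) n|

lemma windowLength_add_one (hn : 0 < n) (hinj : Injective σ)
    (hper : ∀ j, σ (j + n) = σ j + n) (k : ℤ) :
    windowLength n σ (k + 1) = windowLength n σ k := by
  have hleft : Icc (k + 1) (k + n) = insert (k + 1) (Icc (k + 1 + 1) (k + n)) :=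
    (insert_Icc_add_one_left_eq_Icc (by omega)).symm
  have hright : Icc (k + 1 + 1) (k + 1 + n) = insert (k + n + 1) (Icc (k + 1 + 1) (k + n)) := by
    rw [insert_Icc_right_eq_Icc_add_one (by omega), add_right_comm k n 1]
  rw [windowLength, windowLength, hleft, hright,
    pairSum_insert_of_gt (fun a ha => by rw [mem_Icc] at ha; omega),
    pairSum_insert_of_lt (fun a ha => by rw [mem_Icc] at ha; omega)]
  refine congrArg _ (sum_congr rfl fun a ha => ?_)
  rw [mem_Icc] at ha
  have hnd : ¬ n ∣ σ a - σ (k + 1) := fun h => by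
    have := Int.eq_zero_of_dvd_of_nonneg_of_lt (by omega) (by omega)
      (dvd_sub_of_dvd_apply_sub hinj hper h)
    omega
  rw [add_right_comm, hper, show σ (k + 1) + n - σ a = -(σ a - σ (k + 1)) + n by ring,
    Int.abs_fdiv_neg_add_self hn.ne' hnd]

lemma windowLength_eq_affineLength (hn : 0 < n) (hinj : Injective σ)
    (hper : ∀ j, σ (j + n) = σ j + n) (k : ℤ) : windowLength n σ k = affineLength n σ := by
  induction k using Int.induction_on with
  | zero => simp only [windowLength, affineLength, pairSum, zero_add]
  | succ k ih => rw [windowLength_add_one hn hinj hper, ih]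
  | pred k ih => rw [← ih, ← windowLength_add_one hn hinj hper, sub_add_cancel]

lemma windowLength_comp_affineSimple (hn : 2 ≤ n) (σ : ℤ → ℤ) (i : ℤ) :
    windowLength n (σ ∘ affineSimple n i) (i - 1) = windowLength n σ (i - 1)
      - |Int.fdiv (σ (i + 1) - σ i) n| + |Int.fdiv (σ i - σ (i + 1)) n| := by
  rw [windowLength, windowLength, ← pairSum_comp_swap (f := fun a b => |Int.fdiv (σ b - σ a) n|)
    (mem_Icc.mpr ⟨by omega, by omega⟩) (mem_Icc.mpr ⟨by omega, by omega⟩)]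
  refine pairSum_congr fun a ha b hb => ?_
  rw [mem_Icc] at ha hb
  rw [comp_apply, comp_apply, affineSimple_eq_swap hn (by omega) (by omega),
    affineSimple_eq_swap hn (a := a) (by omega) (by omega)]

end Window

theorem stmt_14_general (n : ℤ) (hn : 2 ≤ n) (σ : ℤ → ℤ)
    (hbij : Function.Bijective σ) (hper : ∀ i : ℤ, σ (i + n) = σ i + n)
    (i : ℤ) :
    |affineLength n (σ ∘ affineSimple n i) - affineLength n σ| = 1 := by
  have hn0 : 0 < n := by omega
  have hτinj : Injective (σ ∘ affineSimple n i) :=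
    hbij.injective.comp (affineSimple_involutive hn i).injective
  have hτper : ∀ j, (σ ∘ affineSimple n i) (j + n) = (σ ∘ affineSimple n i) j + n := fun j => by
    simp only [comp_apply, affineSimple_add_self, hper]
  have hnd : ¬ n ∣ σ (i + 1) - σ i := fun h => by
    have := Int.le_of_dvd one_pos (by simpa using dvd_sub_of_dvd_apply_sub hbij.injective hper h)
    omega
  rw [← windowLength_eq_affineLength hn0 hτinj hτper (i - 1),
    ← windowLength_eq_affineLength hn0 hbij.injective hper (i - 1),
    windowLength_comp_affineSimple hn, show σ i - σ (i + 1) = -(σ (i + 1) - σ i) by ring]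
  convert Int.abs_sub_abs_fdiv_neg hn0.ne' hnd using 2
  abel

/-- Multiplying by an affine simple transposition changes length by exactly one. -/
theorem stmt_14 (n : ℤ) (hn : 2 ≤ n) (σ : ℤ → ℤ)
    (hbij : Function.Bijective σ) (hper : ∀ i : ℤ, σ (i + n) = σ i + n)
    (i : ℤ) (hi : 1 ≤ i) (hin : i ≤ n) :
    |affineLength n (σ ∘ affineSimple n i) - affineLength n σ| = 1 :=
  stmt_14_general n hn σ hbij hper i
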